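/- Fix integers 0 ≤ ℓ < k, let n = k + ℓ + 3, and let F be the abstract simplicial complex on vertex set [n] ∪ {p} whose faces are all subsets of [n] of size at most k + 1 and all sets {p} ∪ σ with σ ⊆ [n] of size at most ℓ + 1. Let σ, τ be disjoint faces of F with dim σ = s = ℓ + 1, dim τ = t = k − 1, and p ∈ σ. Then: (i) no (s+1)-dimensional face of F contains σ, and (ii) there are exactly two (t+1)-dimensional faces of F containing τ and disjoint from σ. -/

import Mathlib

/-- The complex `F` on vertex set `[n] ∪ {p}` (with `p = 0`, `[n] = {1,…,n}`):
faces are nonempty subsets of `[n]` of size at most `k+1` together with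
nonempty sets containing `0` of size at most `ℓ+2`. -/
def isFaceF (k l n : ℕ) (σ : Finset ℕ) : Prop :=
  σ.Nonempty ∧ σ ⊆ insert 0 (Finset.Icc 1 n) ∧
    (if 0 ∈ σ then σ.card ≤ l + 2 else σ.card ≤ k + 1)

/-! A face containing `p = 0` has at most `ℓ + 2` vertices, so nothing of size `ℓ + 3` contains `σ`.
A `k`-face disjoint from `σ` avoids `p`, hence is any `(k+1)`-subset of `[n] \ σ`; those containing
`τ` are `τ` plus one of the `(n + 1) - (ℓ + 2) - k = 2` vertices outside `σ ∪ τ`. -/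

namespace Finset

variable {α : Type*} [DecidableEq α]

theorem ncard_setOf_subset_superset_card_succ {τ U : Finset α} (hτU : τ ⊆ U) :
    {ν : Finset α | ν ⊆ U ∧ τ ⊆ ν ∧ ν.card = τ.card + 1}.ncard = (U \ τ).card := by
  have hset : {ν : Finset α | ν ⊆ U ∧ τ ⊆ ν ∧ ν.card = τ.card + 1} =
      ((U \ τ).image (insert · τ) : Set (Finset α)) := by
    ext ν
    simp only [Set.mem_ofPred_eq, coe_image, Set.mem_image, mem_coe, mem_sdiff]
    constructor
    · rintro ⟨hνU, hτν, hcard⟩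
      obtain ⟨a, haτ, rfl⟩ := exists_eq_insert_iff.mpr ⟨hτν, hcard.symm⟩
      exact ⟨a, ⟨hνU (mem_insert_self a τ), haτ⟩, rfl⟩
    · rintro ⟨a, ⟨haU, haτ⟩, rfl⟩
      exact ⟨insert_subset haU hτU, subset_insert a τ, card_insert_of_notMem haτ⟩
  rw [hset, Set.ncard_coe_finset, card_image_of_injOn]
  intro a ha b _ hab
  exact (insert_inj (mem_sdiff.mp ha).2).mp hab

end Finset

open Finset

theorem card_insert_zero_Icc_one (n : ℕ) : (insert 0 (Icc 1 n)).card = n + 1 := by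
  rw [card_insert_of_notMem (by simp), Nat.card_Icc, Nat.add_sub_cancel]

section isFaceF

variable {k l n : ℕ} {σ ν : Finset ℕ}

theorem isFaceF.card_le_of_zero_mem (hν : isFaceF k l n ν) (h0 : 0 ∈ ν) : ν.card ≤ l + 2 := by
  simpa [h0] using hν.2.2

theorem isFaceF_iff_subset_of_disjoint (h0σ : 0 ∈ σ) (hνσ : Disjoint ν σ) (hcard : ν.card = k + 1) :
    isFaceF k l n ν ↔ ν ⊆ insert 0 (Icc 1 n) := by
  have h0ν : 0 ∉ ν := fun h => disjoint_left.mp hνσ h h0σ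
  have hne : ν.Nonempty := card_pos.mp (by omega)
  simp [isFaceF, h0ν, hne, hcard]

end isFaceF

theorem stmt7_general (k l : ℕ) (σ τ : Finset ℕ)
    (hσ : isFaceF k l (k + l + 3) σ) (hτ : isFaceF k l (k + l + 3) τ)
    (hdisj : Disjoint σ τ) (hcσ : σ.card = l + 2) (h0σ : 0 ∈ σ)
    (hcτ : τ.card = k) :
    {ν : Finset ℕ | isFaceF k l (k + l + 3) ν ∧ σ ⊆ ν ∧ ν.card = l + 3} = ∅ ∧
    {ν : Finset ℕ | isFaceF k l (k + l + 3) ν ∧ τ ⊆ ν ∧ ν.card = k + 1 ∧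
      Disjoint ν σ}.ncard = 2 := by
  set V := insert 0 (Icc 1 (k + l + 3))
  refine ⟨Set.eq_empty_of_forall_notMem fun ν ⟨hν, hσν, hcard⟩ => ?_, ?_⟩
  · have := hν.card_le_of_zero_mem (hσν h0σ)
    omega
  have hset : {ν : Finset ℕ | isFaceF k l (k + l + 3) ν ∧ τ ⊆ ν ∧ ν.card = k + 1 ∧
      Disjoint ν σ} = {ν | ν ⊆ V \ σ ∧ τ ⊆ ν ∧ ν.card = τ.card + 1} := by
    ext ν
    simp only [Set.mem_ofPred_eq, subset_sdiff, hcτ]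
    constructor
    · rintro ⟨hν, hτν, hcard, hνσ⟩
      exact ⟨⟨(isFaceF_iff_subset_of_disjoint h0σ hνσ hcard).mp hν, hνσ⟩, hτν, hcard⟩
    · rintro ⟨⟨hνV, hνσ⟩, hτν, hcard⟩
      exact ⟨(isFaceF_iff_subset_of_disjoint h0σ hνσ hcard).mpr hνV, hτν, hcard, hνσ⟩
  have hστV : σ ∪ τ ⊆ V := union_subset hσ.2.1 hτ.2.1
  rw [hset, ncard_setOf_subset_superset_card_succ (subset_sdiff.mpr ⟨hτ.2.1, hdisj.symm⟩),
    sdiff_sdiff_left, sup_eq_union, card_sdiff_of_subset hστV, card_union_of_disjoint hdisj,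
    card_insert_zero_Icc_one, hcσ, hcτ]
  omega

/-- for disjoint faces σ, τ of F with dim σ = ℓ + 1, p ∈ σ, and
dim τ = k − 1: (i) no face of dimension ℓ + 2 contains σ;
(ii) exactly two k-dimensional faces contain τ and are disjoint from σ. -/
theorem stmt7 (k l : ℕ) (hl : l < k) (σ τ : Finset ℕ)
    (hσ : isFaceF k l (k + l + 3) σ) (hτ : isFaceF k l (k + l + 3) τ)
    (hdisj : Disjoint σ τ) (hcσ : σ.card = l + 2) (h0σ : 0 ∈ σ)
    (hcτ : τ.card = k) :
    {ν : Finset ℕ | isFaceF k l (k + l + 3) ν ∧ σ ⊆ ν ∧ ν.card = l + 3} = ∅ ∧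
    {ν : Finset ℕ | isFaceF k l (k + l + 3) ν ∧ τ ⊆ ν ∧ ν.card = k + 1 ∧
      Disjoint ν σ}.ncard = 2 :=
  stmt7_general k l σ τ hσ hτ hdisj hcσ h0σ hcτ
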